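/- arXiv:1501.04783 — 2 statements merged into one kernel-verified Lean document; each statement's English description precedes it below -/
import Mathlib

section
/- For orthonormal vectors u, v, w in ℝ⁷, one has χ(u,v,w) = 0 if and only if φ₀(u,v,w) = 1 or φ₀(u,v,w) = −1 (i.e. the oriented 3-plane spanned by u,v,w is associative exactly when χ vanishes on it). -/
open scoped RealInnerProductSpace

noncomputable section

/-- ℝ⁷ with its Euclidean inner product. -/
abbrev V7 := EuclideanSpace ℝ (Fin 7)

/-- The standard G₂ 3-form φ₀ = e¹²³+e¹⁴⁵+e¹⁶⁷+e²⁴⁶−e²⁵⁷−e³⁴⁷−e³⁵⁶ on ℝ⁷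
(indices shifted to 0-based), written as a trilinear alternating function. -/
def phi0 : (Fin 3 → V7) → ℝ := fun v =>
  let m : Fin 7 → Fin 7 → Fin 7 → ℝ := fun i j k =>
    Matrix.det !![v 0 i, v 0 j, v 0 k; v 1 i, v 1 j, v 1 k; v 2 i, v 2 j, v 2 k]
  m 0 1 2 + m 0 3 4 + m 0 5 6 + m 1 3 5 - m 1 4 6 - m 2 3 6 - m 2 4 5

/-- The 4-form ∗φ₀ = e⁴⁵⁶⁷+e²³⁶⁷+e²³⁴⁵+e¹³⁵⁷−e¹³⁴⁶−e¹²⁵⁶−e¹²⁴⁷ (0-based indices). -/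
def starPhi0 : (Fin 4 → V7) → ℝ := fun v =>
  let m : Fin 7 → Fin 7 → Fin 7 → Fin 7 → ℝ := fun i j k l =>
    Matrix.det !![v 0 i, v 0 j, v 0 k, v 0 l; v 1 i, v 1 j, v 1 k, v 1 l;
                  v 2 i, v 2 j, v 2 k, v 2 l; v 3 i, v 3 j, v 3 k, v 3 l]
  m 3 4 5 6 + m 1 2 5 6 + m 1 2 3 4 + m 0 2 4 6 - m 0 2 3 5 - m 0 1 4 5 - m 0 1 3 6

/-- The cross product on ℝ⁷: the unique vector with ⟨u×v, z⟩ = φ₀(u,v,z) for all z. -/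
def cross (u v : V7) : V7 := WithLp.toLp 2 (fun i => phi0 ![u, v, EuclideanSpace.single i 1])

/-- The triple cross product χ: the unique vector with ⟨χ(u,v,w), z⟩ = ∗φ₀(u,v,w,z). -/
def chi (u v w : V7) : V7 := WithLp.toLp 2 (fun i => starPhi0 ![u, v, w, EuclideanSpace.single i 1])

/-- Interior product ξ⌟α : contraction of a (k+1)-form with ξ in its first slot. -/
def iprod {k : ℕ} (ξ : V7) (α : (Fin (k + 1) → V7) → ℝ) : (Fin k → V7) → ℝ :=
  fun v => α (Fin.cons ξ v)

/-- Wedge product of alternating forms (determinant convention). -/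
def wedge {p q : ℕ} (α : (Fin p → V7) → ℝ) (β : (Fin q → V7) → ℝ) :
    (Fin (p + q) → V7) → ℝ := fun v =>
  (1 / ((p.factorial : ℝ) * q.factorial)) *
    ∑ σ : Equiv.Perm (Fin (p + q)), ((Equiv.Perm.sign σ : ℤ) : ℝ) *
      α (fun i => v (σ (Fin.castAdd q i))) * β (fun j => v (σ (Fin.natAdd p j)))

/-- The dual covector ξ^# = ⟨ξ,·⟩, as a 1-form. -/
def dualCov (ξ : V7) : (Fin 1 → V7) → ℝ := fun v => ⟪ξ, v 0⟫

/-- The standard volume form e¹∧⋯∧e⁷ on ℝ⁷. -/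
def vol7 : (Fin 7 → V7) → ℝ := fun v => Matrix.det (Matrix.of fun i j => v i j)

/-!
The value φ₀(u, v, w) and the seven components of χ(u, v, w) are signed sums of the 3 × 3 minors
e^{ijk}(u, v, w), which together use each of the 35 minors exactly once. So
‖χ(u, v, w)‖² + φ₀(u, v, w)² is the sum of all squared minors, which is det Gram(u, v, w) by
Cauchy–Binet, plus cross terms that cancel by the Plücker relations. For an orthonormal triple
the Gram determinant is 1, so χ(u, v, w) = 0 exactly when φ₀(u, v, w)² = 1.
-/

theorem Matrix.det_fin_four {R : Type*} [CommRing R] (M : Matrix (Fin 4) (Fin 4) R) : M.det =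
    M 0 0 * (M 1 1 * (M 2 2 * M 3 3 - M 2 3 * M 3 2) - M 1 2 * (M 2 1 * M 3 3 - M 2 3 * M 3 1)
      + M 1 3 * (M 2 1 * M 3 2 - M 2 2 * M 3 1))
    - M 0 1 * (M 1 0 * (M 2 2 * M 3 3 - M 2 3 * M 3 2) - M 1 2 * (M 2 0 * M 3 3 - M 2 3 * M 3 0)
      + M 1 3 * (M 2 0 * M 3 2 - M 2 2 * M 3 0))
    + M 0 2 * (M 1 0 * (M 2 1 * M 3 3 - M 2 3 * M 3 1) - M 1 1 * (M 2 0 * M 3 3 - M 2 3 * M 3 0)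
      + M 1 3 * (M 2 0 * M 3 1 - M 2 1 * M 3 0))
    - M 0 3 * (M 1 0 * (M 2 1 * M 3 2 - M 2 2 * M 3 1) - M 1 1 * (M 2 0 * M 3 2 - M 2 2 * M 3 0)
      + M 1 2 * (M 2 0 * M 3 1 - M 2 1 * M 3 0)) := by
  rw [Matrix.det_succ_row_zero]
  simp [Fin.sum_univ_succ, Matrix.det_fin_three, Fin.succAbove]
  ring

/-- `minor3 u v w i j k = e^{ijk}(u, v, w)`. -/
def minor3 (u v w : V7) (i j k : Fin 7) : ℝ :=
  !![u i, u j, u k; v i, v j, v k; w i, w j, w k].det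

local notation "m" => minor3

lemma minor3_eq (u v w : V7) (i j k : Fin 7) : m u v w i j k =
    u i * v j * w k - u i * v k * w j - u j * v i * w k + u j * v k * w i + u k * v i * w j
      - u k * v j * w i := by
  simp [minor3, Matrix.det_fin_three]

lemma phi0_eq_minor3 (u v w : V7) : phi0 ![u, v, w] =
    m u v w 0 1 2 + m u v w 0 3 4 + m u v w 0 5 6 + m u v w 1 3 5 - m u v w 1 4 6
      - m u v w 2 3 6 - m u v w 2 4 5 := rfl

/-- Laplace expansion of `∗φ₀(u, v, w, e_l)` along the row of `e_l`. -/
lemma ofLp_chi_eq_minor3 (u v w : V7) : (chi u v w).ofLp =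
    ![-m u v w 2 4 6 + m u v w 2 3 5 + m u v w 1 4 5 + m u v w 1 3 6,
      -m u v w 2 5 6 - m u v w 2 3 4 - m u v w 0 4 5 - m u v w 0 3 6,
      m u v w 1 5 6 + m u v w 1 3 4 + m u v w 0 4 6 - m u v w 0 3 5,
      -m u v w 4 5 6 - m u v w 1 2 4 + m u v w 0 2 5 + m u v w 0 1 6,
      m u v w 3 5 6 + m u v w 1 2 3 - m u v w 0 2 6 + m u v w 0 1 5,
      -m u v w 3 4 6 - m u v w 1 2 6 - m u v w 0 2 3 - m u v w 0 1 4,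
      m u v w 3 4 5 + m u v w 1 2 5 + m u v w 0 2 4 - m u v w 0 1 3] := by
  ext l
  fin_cases l <;>
    simp [chi, starPhi0, minor3, Matrix.det_fin_four, Matrix.det_fin_three, PiLp.single_apply] <;>
    ring

theorem norm_sq_chi_add_phi0_sq (u v w : V7) :
    ‖chi u v w‖ ^ 2 + phi0 ![u, v, w] ^ 2 = (Matrix.gram ℝ ![u, v, w]).det := by
  rw [EuclideanSpace.norm_sq_eq, ofLp_chi_eq_minor3, phi0_eq_minor3, Matrix.det_fin_three]
  simp only [Matrix.gram_apply, Matrix.cons_val_zero, Matrix.cons_val_one, Matrix.cons_val_two,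
    Matrix.head_cons, Matrix.tail_cons, Fin.sum_univ_seven, Real.norm_eq_abs, sq_abs,
    Matrix.cons_val, minor3_eq, PiLp.inner_apply, RCLike.inner_apply, conj_trivial]
  ring

/-- for orthonormal u,v,w, χ(u,v,w) = 0 iff φ₀(u,v,w) = ±1
(the oriented 3-plane ⟨u,v,w⟩ is associative exactly when χ vanishes on it). -/
theorem chi_eq_zero_iff_associative (u v w : V7) (h : Orthonormal ℝ ![u, v, w]) :
    chi u v w = 0 ↔ phi0 ![u, v, w] = 1 ∨ phi0 ![u, v, w] = -1 := by
  have key := norm_sq_chi_add_phi0_sq u v w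
  rw [Matrix.gram_eq_one_iff_orthonormal.mpr h, Matrix.det_one] at key
  rw [← norm_eq_zero, ← sq_eq_zero_iff, ← sq_eq_one_iff]
  constructor <;> intro <;> linarith

end
end

section
/- For all vectors u, v, ξ in ℝ⁷: φ₀(u×ξ, v, ξ) = ‖ξ‖²⟨u,v⟩ − ⟨ξ,u⟩⟨ξ,v⟩. In particular, if ξ is a unit vector and u, v are orthogonal to ξ, then the 2-form ω_ξ = ξ⌟φ₀ and the map J_ξ(u) = u×ξ satisfy ω_ξ(J_ξ(u), v) = ⟨u,v⟩. -/
open scoped RealInnerProductSpace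

noncomputable section

/-! The identity is the polarized Lagrange identity
⟨u×ξ, v×ξ⟩ = ‖ξ‖²⟨u,v⟩ − ⟨ξ,u⟩⟨ξ,v⟩ in disguise: since φ₀ is invariant under cyclic
permutations and ⟨a×b, c⟩ = φ₀(a,b,c), we have φ₀(u×ξ, v, ξ) = φ₀(v, ξ, u×ξ) = ⟨v×ξ, u×ξ⟩.
The Lagrange identity itself is checked in coordinates. -/

lemma cross_eq (u v : V7) : cross u v = WithLp.toLp 2 ![
    (u 1 * v 2 - u 2 * v 1) + (u 3 * v 4 - u 4 * v 3) + (u 5 * v 6 - u 6 * v 5),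
    (u 2 * v 0 - u 0 * v 2) + (u 3 * v 5 - u 5 * v 3) - (u 4 * v 6 - u 6 * v 4),
    (u 0 * v 1 - u 1 * v 0) - (u 3 * v 6 - u 6 * v 3) - (u 4 * v 5 - u 5 * v 4),
    (u 4 * v 0 - u 0 * v 4) + (u 5 * v 1 - u 1 * v 5) - (u 6 * v 2 - u 2 * v 6),
    (u 0 * v 3 - u 3 * v 0) - (u 6 * v 1 - u 1 * v 6) - (u 5 * v 2 - u 2 * v 5),
    (u 6 * v 0 - u 0 * v 6) + (u 1 * v 3 - u 3 * v 1) - (u 2 * v 4 - u 4 * v 2),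
    (u 0 * v 5 - u 5 * v 0) - (u 1 * v 4 - u 4 * v 1) - (u 2 * v 3 - u 3 * v 2)] := by
  ext i
  fin_cases i <;>
    simp [cross, phi0, Matrix.det_fin_three] <;> ring

lemma inner_cross (u v z : V7) : ⟪cross u v, z⟫ = phi0 ![u, v, z] := by
  simp only [cross_eq, phi0, Matrix.det_fin_three, PiLp.inner_apply, Fin.sum_univ_seven,
    RCLike.inner_apply, Real.ringHom_apply, Matrix.of_apply, Matrix.cons_val', Matrix.cons_val,
    Matrix.cons_val_zero, Matrix.cons_val_one, Matrix.cons_val_fin_one]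
  ring

lemma phi0_cycle (a b c : V7) : phi0 ![c, a, b] = phi0 ![a, b, c] := by
  simp only [phi0, Matrix.det_fin_three, Matrix.of_apply, Matrix.cons_val', Matrix.cons_val,
    Matrix.cons_val_zero, Matrix.cons_val_one, Matrix.cons_val_fin_one]
  ring

lemma inner_cross_cross_right (u v w : V7) :
    ⟪cross u w, cross v w⟫ = ‖w‖ ^ 2 * ⟪u, v⟫ - ⟪w, u⟫ * ⟪w, v⟫ := by
  rw [← real_inner_self_eq_norm_sq]
  simp only [cross_eq, PiLp.inner_apply, Fin.sum_univ_seven, RCLike.inner_apply,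
    Real.ringHom_apply, Matrix.cons_val, Matrix.cons_val_zero, Matrix.cons_val_one]
  ring

lemma phi0_cross_left (u v ξ : V7) :
    phi0 ![cross u ξ, v, ξ] = ‖ξ‖ ^ 2 * ⟪u, v⟫ - ⟪ξ, u⟫ * ⟪ξ, v⟫ := by
  rw [phi0_cycle, ← inner_cross, inner_cross_cross_right, real_inner_comm u]
  ring

/-- φ₀(u×ξ, v, ξ) = ‖ξ‖²⟨u,v⟩ − ⟨ξ,u⟩⟨ξ,v⟩; in particular, for a
unit vector ξ and u,v ⟂ ξ, the 2-form ω_ξ = ξ⌟φ₀ and J_ξ(u) = u×ξ satisfy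
ω_ξ(J_ξ(u), v) = ⟨u,v⟩. -/
theorem phi0_cross_contract :
    (∀ u v ξ : V7, phi0 ![cross u ξ, v, ξ] = ‖ξ‖ ^ 2 * ⟪u, v⟫ - ⟪ξ, u⟫ * ⟪ξ, v⟫) ∧
    (∀ ξ u v : V7, ‖ξ‖ = 1 → ⟪ξ, u⟫ = 0 → ⟪ξ, v⟫ = 0 →
      iprod ξ phi0 ![cross u ξ, v] = ⟪u, v⟫) := by
  refine ⟨phi0_cross_left, fun ξ u v hξ hu hv => ?_⟩
  change phi0 ![ξ, cross u ξ, v] = ⟪u, v⟫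
  rw [phi0_cycle, phi0_cross_left, hξ, hu, hv]
  ring

end
end
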